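/- Every determined finite game form is reach-maximizable: if F = ⟨St_A, St_B, O, ρ⟩ is determined, then for every partial valuation α : O∖E → [0,1], either v_α = 0 or there exists a pure strategy a ∈ St_A optimal in ⟨F, α̂⟩ such that ρ(a, St_B) ⊆ O∖E; in particular F is RM w.r.t. every partial valuation. -/

import Mathlib

open scoped BigOperators Classical

noncomputable section

/-- A probability distribution on a finite type. -/
def FDist (X : Type) [Fintype X] : Type :=
  { p : X → ℝ // (∀ x, 0 ≤ p x) ∧ ∑ x, p x = 1 }

namespace CRG

variable {A B Q D : Type} [Fintype A] [Fintype B] [Fintype Q] [Fintype D]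

/-- The support of a distribution. -/
def supp {X : Type} [Fintype X] (σ : FDist X) : Set X := { x | σ.1 x ≠ 0 }

/-- The Dirac distribution. -/
def dirac {X : Type} [Fintype X] [DecidableEq X] (x : X) : FDist X :=
  ⟨fun y => if y = x then 1 else 0, by
    constructor
    · intro y
      dsimp only
      split <;> norm_num
    · simp⟩

/-- Outcome of a pair of mixed strategies in the game in normal form with payoff `u`. -/
def out (u : A → B → ℝ) (σA : FDist A) (σB : FDist B) : ℝ :=
  ∑ a, ∑ b, σA.1 a * σB.1 b * u a b

/-- Outcome of a mixed strategy of Player A against a pure action of Player B. -/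
def outB (u : A → B → ℝ) (σA : FDist A) (b : B) : ℝ :=
  ∑ a, σA.1 a * u a b

/-- The value of a Player A mixed strategy in a game in normal form. -/
def valStratGF (u : A → B → ℝ) (σA : FDist A) : ℝ :=
  ⨅ σB : FDist B, out u σA σB

/-- The (von Neumann) value of a finite game in normal form. -/
def valGF (u : A → B → ℝ) : ℝ :=
  ⨆ σA : FDist A, valStratGF u σA

/-- The optimal Player A mixed strategies in a game in normal form. -/
def OptA (u : A → B → ℝ) : Set (FDist A) := { σA | valStratGF u σA = valGF u }

/-- The optimal actions of Player B against the Player A mixed strategy `σA`. -/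
def optActs (u : A → B → ℝ) (σA : FDist A) : Set B :=
  { b | outB u σA b = valStratGF u σA }

/-- μ_v : the lift of a valuation of the states to the Nature states. -/
def lift (dist : D → FDist Q) (v : Q → ℝ) (d : D) : ℝ := ∑ q, (dist d).1 q * v q

/-- The payoff function of the local interaction `F_q` valued by `μ_m`. -/
def locPay (δ : Q → A → B → D) (dist : D → FDist Q) (m : Q → ℝ) (q : Q) : A → B → ℝ :=
  fun a b => lift dist m (δ q a b)

/-- One-step transition probability between states. -/
def step (δ : Q → A → B → D) (dist : D → FDist Q) (σA : FDist A) (σB : FDist B)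
    (q q' : Q) : ℝ :=
  ∑ a, ∑ b, σA.1 a * σB.1 b * (dist (δ q a b)).1 q'

/-- The operator Δ on valuations of the states. -/
def Δop (δ : Q → A → B → D) (dist : D → FDist Q) (T : Q) (v : Q → ℝ) : Q → ℝ :=
  fun q => if q = T then 1 else valGF (fun a b => lift dist v (δ q a b))

/-- The target `T` is an absorbing (self-looping) sink. -/
def Absorbing (δ : Q → A → B → D) (dist : D → FDist Q) (T : Q) : Prop :=
  ∀ a b, (dist (δ T a b)).1 = fun q => if q = T then 1 else 0

/-- `m` is the least fixed point of Δ on `[0,1]^Q`. -/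
def IsLfpDelta (δ : Q → A → B → D) (dist : D → FDist Q) (T : Q) (m : Q → ℝ) : Prop :=
  (∀ q, m q ∈ Set.Icc (0:ℝ) 1) ∧ Δop δ dist T m = m ∧
    ∀ v : Q → ℝ, (∀ q, v q ∈ Set.Icc (0:ℝ) 1) → Δop δ dist T v = v → ∀ q, m q ≤ v q

/-- A strategy: a history of past states together with the current state gives a
mixed action.  (This encodes maps `Q⁺ → 𝒟(X)`.) -/
def Strat (Q X : Type) [Fintype X] : Type := List Q → Q → FDist X

/-- Residual strategy after the history `π` has been played. -/
def residual {X : Type} [Fintype X] (s : Strat Q X) (π : List Q) : Strat Q X :=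
  fun h q => s (π ++ h) q

/-- The (positional) strategy associated with a per-state choice of mixed actions. -/
def ofPos {X : Type} [Fintype X] (s : Q → FDist X) : Strat Q X := fun _ q => s q

/-- Probability of reaching the set `S` within `n` steps from current state `q`,
history `h` having been played. -/
def reachSetNAux (δ : Q → A → B → D) (dist : D → FDist Q) (S : Set Q) :
    ℕ → Strat Q A → Strat Q B → List Q → Q → ℝ
  | 0, _, _, _, q => if q ∈ S then 1 else 0
  | n + 1, sA, sB, h, q =>
      if q ∈ S then 1
      else ∑ q', step δ dist (sA h q) (sB h q) q q' *
        reachSetNAux δ dist S n sA sB (h ++ [q]) q'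

/-- Probability of reaching the set `S` within `n` steps from state `q`. -/
def reachSetN (δ : Q → A → B → D) (dist : D → FDist Q) (S : Set Q) (n : ℕ)
    (sA : Strat Q A) (sB : Strat Q B) (q : Q) : ℝ :=
  reachSetNAux δ dist S n sA sB [] q

/-- Probability of reaching the target `T` within `n` steps from state `q`. -/
def reachN (δ : Q → A → B → D) (dist : D → FDist Q) (T : Q) (n : ℕ)
    (sA : Strat Q A) (sB : Strat Q B) (q : Q) : ℝ :=
  reachSetN δ dist {T} n sA sB q

/-- Probability of eventually reaching the target `T` from state `q`. -/
def reach (δ : Q → A → B → D) (dist : D → FDist Q) (T : Q)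
    (sA : Strat Q A) (sB : Strat Q B) (q : Q) : ℝ :=
  ⨆ n : ℕ, reachN δ dist T n sA sB q

/-- The value of a Player A strategy from state `q`. -/
def valA (δ : Q → A → B → D) (dist : D → FDist Q) (T : Q) (sA : Strat Q A) (q : Q) : ℝ :=
  ⨅ sB : Strat Q B, reach δ dist T sA sB q

/-- The value of the game from state `q`. -/
def value (δ : Q → A → B → D) (dist : D → FDist Q) (T : Q) (q : Q) : ℝ :=
  ⨆ sA : Strat Q A, valA δ dist T sA q

/-- A state is maximizable when Player A has an optimal strategy from it. -/
def Maximizable (δ : Q → A → B → D) (dist : D → FDist Q) (T q : Q) : Prop :=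
  ∃ sA : Strat Q A, valA δ dist T sA q = value δ dist T q

/-- A positional Player A strategy locally dominates the valuation `v`. -/
def LocallyDominates (δ : Q → A → B → D) (dist : D → FDist Q)
    (sA : Q → FDist A) (v : Q → ℝ) : Prop :=
  ∀ q, v q ≤ valStratGF (fun a b => lift dist v (δ q a b)) (sA q)

/-- Transition function ι of the MDP induced by a positional Player A strategy. -/
def stepB [DecidableEq B] (δ : Q → A → B → D) (dist : D → FDist Q)
    (sA : Q → FDist A) (q : Q) (b : B) (q' : Q) : ℝ :=
  step δ dist (sA q) (dirac b) q q'

/-- An end component of the MDP induced by the positional Player A strategy `sA`. -/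
structure EndComp [DecidableEq B] (δ : Q → A → B → D) (dist : D → FDist Q)
    (sA : Q → FDist A) where
  states : Set Q
  acts : Q → Set B
  acts_nonempty : ∀ q ∈ states, (acts q).Nonempty
  closed : ∀ q ∈ states, ∀ b ∈ acts q, ∀ q', stepB δ dist sA q b q' ≠ 0 → q' ∈ states
  connected : ∀ q ∈ states, ∀ q' ∈ states,
    Relation.ReflTransGen
      (fun x y => x ∈ states ∧ ∃ b ∈ acts x, stepB δ dist sA x b y ≠ 0) q q'

/-- `S_D` : the Nature states having a non-zero probability to reach `S`. -/
def natS (dist : D → FDist Q) (S : Set Q) : Set D :=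
  { d | ∃ q ∈ S, (dist d).1 q ≠ 0 }

/-- Progressive optimal local strategies at `q` w.r.t. the set `Gd`. -/
def Prog (δ : Q → A → B → D) (dist : D → FDist Q) (m : Q → ℝ) (q : Q)
    (Gd : Set Q) : Set (FDist A) :=
  { σA | σA ∈ OptA (locPay δ dist m q) ∧
      ∀ b ∈ optActs (locPay δ dist m q) σA, ∃ a ∈ supp σA, δ q a b ∈ natS dist Gd }

/-- Risky optimal local strategies at `q` w.r.t. the set `Bd`. -/
def Risk (δ : Q → A → B → D) (dist : D → FDist Q) (m : Q → ℝ) (q : Q)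
    (Bd : Set Q) : Set (FDist A) :=
  { σA | σA ∈ OptA (locPay δ dist m q) ∧
      ∃ b ∈ optActs (locPay δ dist m q) σA, ∃ a ∈ supp σA, δ q a b ∈ natS dist Bd }

/-- Efficient local strategies: progressive and not risky. -/
def Eff (δ : Q → A → B → D) (dist : D → FDist Q) (m : Q → ℝ) (q : Q)
    (Gd Bd : Set Q) : Set (FDist A) :=
  Prog δ dist m q Gd \ Risk δ dist m q Bd

/-- The increasing sequence of sets of secure states w.r.t. `Bd`. -/
def SecN (δ : Q → A → B → D) (dist : D → FDist Q) (m : Q → ℝ) (T : Q) (Bd : Set Q) :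
    ℕ → Set Q
  | 0 => {T}
  | n + 1 => SecN δ dist m T Bd n ∪
      { q | q ∉ Bd ∧ (Eff δ dist m q (SecN δ dist m T Bd n) Bd).Nonempty }

/-- The set of secure states w.r.t. `Bd`. -/
def Sec (δ : Q → A → B → D) (dist : D → FDist Q) (m : Q → ℝ) (T : Q) (Bd : Set Q) :
    Set Q :=
  (⋃ n : ℕ, SecN δ dist m T Bd n) ∪ { q | m q = 0 }

/-- The sequence of sets of bad states. -/
def BadN (δ : Q → A → B → D) (dist : D → FDist Q) (m : Q → ℝ) (T : Q) : ℕ → Set Q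
  | 0 => ∅
  | n + 1 => (Sec δ dist m T (BadN δ dist m T n))ᶜ

/-- The set of bad states. -/
def Bad (δ : Q → A → B → D) (dist : D → FDist Q) (m : Q → ℝ) (T : Q) : Set Q :=
  BadN δ dist m T (Fintype.card Q)

/-- `α[y]` : the total valuation extending the partial valuation `α : O∖E → [0,1]`
with the value `y` on `E`. -/
def extendVal {O : Type} (E : Set O) (α : O → ℝ) (y : ℝ) : O → ℝ :=
  fun o => if o ∈ E then y else α o

/-- The map `f_α : y ↦ val_{⟨F, α[y]⟩}`. -/
def fval {O : Type} (ρ : A → B → O) (E : Set O) (α : O → ℝ) (y : ℝ) : ℝ :=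
  valGF (fun a b => extendVal E α y (ρ a b))

/-- `v` is the least fixed point of `f_α` on `[0,1]`. -/
def IsLfpVal {O : Type} (ρ : A → B → O) (E : Set O) (α : O → ℝ) (v : ℝ) : Prop :=
  v ∈ Set.Icc (0:ℝ) 1 ∧ fval ρ E α v = v ∧
    ∀ y ∈ Set.Icc (0:ℝ) 1, fval ρ E α y = y → v ≤ y

/-- The game form `ρ` is reach-maximizable w.r.t. the partial valuation `α : O∖E → [0,1]`. -/
def RMwrt {O : Type} (ρ : A → B → O) (E : Set O) (α : O → ℝ) : Prop :=
  ∀ v : ℝ, IsLfpVal ρ E α v →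
    v = 0 ∨
      ∃ σA ∈ OptA (fun a b => extendVal E α v (ρ a b)),
        ∀ b ∈ optActs (fun a b => extendVal E α v (ρ a b)) σA,
          ∃ a ∈ supp σA, ρ a b ∉ E

/-- A reach-maximizable game form: RM w.r.t. every partial valuation of its outcomes. -/
def RMform {O : Type} (ρ : A → B → O) : Prop :=
  ∀ (E : Set O) (α : O → ℝ), (∀ o ∉ E, α o ∈ Set.Icc (0:ℝ) 1) → RMwrt ρ E α

/-- A determined game form. -/
def Determined {O : Type} (ρ : A → B → O) : Prop :=
  ∀ E : Set O, (∃ a, ∀ b, ρ a b ∈ E) ∨ (∃ b, ∀ a, ρ a b ∉ E)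

/-- Transition function of the three-state reachability game `C_{(F,α)}`:
state `0` is `q₀`, state `1` is the target `⊤`, state `2` is the bin `⊥`. -/
def triδ {O : Type} (ρ : A → B → O) (E : Set O) :
    Fin 3 → A → B → (Fin 3 ⊕ {o : O // o ∉ E}) :=
  fun s a b =>
    if s = 0 then
      if h : ρ a b ∈ E then Sum.inl 0 else Sum.inr ⟨ρ a b, h⟩
    else Sum.inl s

/-- Nature distributions of the three-state reachability game `C_{(F,α)}`. -/
def triDist {O : Type} (E : Set O) (α : O → ℝ)
    (hα : ∀ o ∉ E, α o ∈ Set.Icc (0:ℝ) 1) :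
    (Fin 3 ⊕ {o : O // o ∉ E}) → FDist (Fin 3) := fun d =>
  match d with
  | Sum.inl t => dirac t
  | Sum.inr x =>
      ⟨![0, α x.1, 1 - α x.1], by
        obtain ⟨h0, h1⟩ := hα x.1 x.2
        constructor
        · intro s
          fin_cases s <;> simp <;> linarith
        · simp [Fin.sum_univ_three]⟩

/-- An abstract (finite) game form with actions `A` and `B`. -/
structure GameForm (A B : Type) where
  O : Type
  fin : Fintype O
  ρ : A → B → O

/-- All local interactions of the arena `δ` belong to the set `𝒢` of game forms
(up to a renaming of the outcomes into Nature states). -/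
def UsesForms {Q D : Type} (𝒢 : Set (GameForm A B)) (δ : Q → A → B → D) : Prop :=
  ∀ q, ∃ F ∈ 𝒢, ∃ g : F.O → D, δ q = fun a b => g (F.ρ a b)

/-- The sequence of iterates of Δ starting from the valuation `1_{⊤}`. -/
def vseq (δ : Q → A → B → D) (dist : D → FDist Q) (T : Q) : ℕ → Q → ℝ
  | 0 => fun q => if q = T then 1 else 0
  | n + 1 => Δop δ dist T (vseq δ dist T n)

/-- Relevant paths w.r.t. the strategy `sA` from the state `q₀`: the pair `(h, q)`
encodes the path `h · q` (history `h`, current state `q`). -/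
inductive Relevant [DecidableEq B] (δ : Q → A → B → D) (dist : D → FDist Q)
    (m : Q → ℝ) (sA : Strat Q A) (q₀ : Q) : List Q → Q → Prop
  | base : Relevant δ dist m sA q₀ [] q₀
  | step {h : List Q} {q q' : Q} :
      Relevant δ dist m sA q₀ h q →
      (∃ b ∈ optActs (locPay δ dist m q) (sA h q),
        0 < CRG.step δ dist (sA h q) (dirac b) q q') →
      Relevant δ dist m sA q₀ (h ++ [q]) q'

end CRG

/-!
Apply determinacy to the set of outcomes outside `E` worth at least `v = v_α`. If Player A
can force that set with an action `a`, the pure strategy `a` guarantees `v = val⟨F, α̂⟩` and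
never reaches `E`. Otherwise some action `b` of Player B yields only outcomes in `E` or
outcomes worth less than `v`; if `y < v` is the largest of these values, `b` holds the value
of `⟨F, α[y]⟩` down to `y`, so the monotone map `f_α` has a fixed point in `[0, y]`
(Knaster–Tarski), contradicting the minimality of `v` unless `v = 0`.
-/

theorem exists_isFixedPt_mem_Icc {α : Type*} [ConditionallyCompleteLattice α] {f : α → α}
    (hf : Monotone f) {a b : α} (hab : a ≤ b) (ha : a ≤ f a) (hb : f b ≤ b) :
    ∃ z ∈ Set.Icc a b, Function.IsFixedPt f z := by
  have : Fact (a ≤ b) := ⟨hab⟩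
  have hmaps : Set.MapsTo f (Set.Icc a b) (Set.Icc a b) :=
    fun z hz => ⟨ha.trans (hf hz.1), (hf hz.2).trans hb⟩
  let g : Set.Icc a b →o Set.Icc a b := ⟨hmaps.restrict f _ _, fun _ _ h => hf h⟩
  exact ⟨_, g.lfp.2, congrArg Subtype.val g.isFixedPt_lfp⟩

namespace FDist

variable {X : Type} [Fintype X]

instance [Nonempty X] : Nonempty (FDist X) :=
  ⟨CRG.dirac (Classical.arbitrary X)⟩

theorem sum_mul_le (σ : FDist X) {f : X → ℝ} {c : ℝ} (h : ∀ x, f x ≤ c) :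
    ∑ x, σ.1 x * f x ≤ c :=
  calc ∑ x, σ.1 x * f x ≤ ∑ x, σ.1 x * c :=
        Finset.sum_le_sum fun x _ => mul_le_mul_of_nonneg_left (h x) (σ.2.1 x)
    _ = c := by rw [← Finset.sum_mul, σ.2.2, one_mul]

theorem le_sum_mul (σ : FDist X) {f : X → ℝ} {c : ℝ} (h : ∀ x, c ≤ f x) :
    c ≤ ∑ x, σ.1 x * f x :=
  calc c = ∑ x, σ.1 x * c := by rw [← Finset.sum_mul, σ.2.2, one_mul]
    _ ≤ ∑ x, σ.1 x * f x :=
        Finset.sum_le_sum fun x _ => mul_le_mul_of_nonneg_left (h x) (σ.2.1 x)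

end FDist

namespace CRG

variable {A B : Type} [Fintype A] [Fintype B]

theorem mem_supp_dirac {X : Type} [Fintype X] [DecidableEq X] (x : X) : x ∈ supp (dirac x) := by
  simp [supp, dirac]

theorem out_eq_sum_mul_sum (u : A → B → ℝ) (σA : FDist A) (σB : FDist B) :
    out u σA σB = ∑ a, σA.1 a * ∑ b, σB.1 b * u a b := by
  refine Finset.sum_congr rfl fun a _ => ?_
  rw [Finset.mul_sum]
  exact Finset.sum_congr rfl fun b _ => by ring

theorem out_dirac_left [DecidableEq A] (u : A → B → ℝ) (a : A) (σB : FDist B) :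
    out u (dirac a) σB = ∑ b, σB.1 b * u a b := by
  rw [out_eq_sum_mul_sum, Finset.sum_eq_single a] <;> simp +contextual [dirac]

theorem out_dirac_right [DecidableEq B] (u : A → B → ℝ) (σA : FDist A) (b : B) :
    out u σA (dirac b) = ∑ a, σA.1 a * u a b := by
  refine Finset.sum_congr rfl fun a _ => ?_
  rw [Finset.sum_eq_single b] <;> simp +contextual [dirac]

theorem le_out_of_forall_le {u : A → B → ℝ} {c : ℝ} (h : ∀ a b, c ≤ u a b)
    (σA : FDist A) (σB : FDist B) : c ≤ out u σA σB := by
  rw [out_eq_sum_mul_sum]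
  exact σA.le_sum_mul fun a => σB.le_sum_mul fun b => h a b

theorem out_le_of_forall_le {u : A → B → ℝ} {c : ℝ} (h : ∀ a b, u a b ≤ c)
    (σA : FDist A) (σB : FDist B) : out u σA σB ≤ c := by
  rw [out_eq_sum_mul_sum]
  exact σA.sum_mul_le fun a => σB.sum_mul_le fun b => h a b

theorem bddBelow_range_out [Nonempty A] [Nonempty B] (u : A → B → ℝ) (σA : FDist A) :
    BddBelow (Set.range (out u σA)) := by
  let c := Finset.univ.inf' Finset.univ_nonempty fun p : A × B => u p.1 p.2
  refine ⟨c, Set.forall_mem_range.2 (le_out_of_forall_le (fun a b => ?_) σA)⟩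
  exact Finset.inf'_le (fun p : A × B => u p.1 p.2) (Finset.mem_univ (a, b))

theorem valStratGF_le_out [Nonempty A] [Nonempty B] (u : A → B → ℝ) (σA : FDist A)
    (σB : FDist B) : valStratGF u σA ≤ out u σA σB :=
  ciInf_le (bddBelow_range_out u σA) σB

theorem bddAbove_range_valStratGF [Nonempty A] [Nonempty B] (u : A → B → ℝ) :
    BddAbove (Set.range (valStratGF (B := B) u)) := by
  let c := Finset.univ.sup' Finset.univ_nonempty fun p : A × B => u p.1 p.2
  refine ⟨c, Set.forall_mem_range.2 fun σA => (valStratGF_le_out u σA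
    (Classical.arbitrary _)).trans (out_le_of_forall_le (fun a b => ?_) σA _)⟩
  exact Finset.le_sup' (fun p : A × B => u p.1 p.2) (Finset.mem_univ (a, b))

theorem valStratGF_le_valGF [Nonempty A] [Nonempty B] (u : A → B → ℝ) (σA : FDist A) :
    valStratGF u σA ≤ valGF u :=
  le_ciSup (bddAbove_range_valStratGF u) σA

theorem valGF_mono [Nonempty A] [Nonempty B] {u u' : A → B → ℝ} (h : ∀ a b, u a b ≤ u' a b) :
    valGF u ≤ valGF u' := by
  refine ciSup_mono (bddAbove_range_valStratGF u') fun σA => ?_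
  refine ciInf_mono (bddBelow_range_out u σA) fun σB => ?_
  exact Finset.sum_le_sum fun a _ => Finset.sum_le_sum fun b _ =>
    mul_le_mul_of_nonneg_left (h a b) (mul_nonneg (σA.2.1 a) (σB.2.1 b))

theorem le_valStratGF_dirac [Nonempty B] [DecidableEq A] {u : A → B → ℝ} {c : ℝ} {a : A}
    (h : ∀ b, c ≤ u a b) : c ≤ valStratGF u (dirac a) :=
  le_ciInf fun σB => (out_dirac_left u a σB).symm ▸ σB.le_sum_mul h

theorem valGF_nonneg [Nonempty A] [Nonempty B] {u : A → B → ℝ} (h : ∀ a b, 0 ≤ u a b) :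
    0 ≤ valGF u :=
  (le_ciInf fun σB => le_out_of_forall_le h _ σB).trans
    (valStratGF_le_valGF u (dirac (Classical.arbitrary A)))

theorem valGF_le_of_forall_le [Nonempty A] [Nonempty B] {u : A → B → ℝ} {c : ℝ} {b : B}
    (h : ∀ a, u a b ≤ c) : valGF u ≤ c :=
  ciSup_le fun σA => (valStratGF_le_out u σA (dirac b)).trans
    ((out_dirac_right u σA b).symm ▸ σA.sum_mul_le h)

theorem dirac_mem_OptA [Nonempty A] [Nonempty B] [DecidableEq A] {u : A → B → ℝ} {a : A}
    (h : ∀ b, valGF u ≤ u a b) : dirac a ∈ OptA u :=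
  le_antisymm (valStratGF_le_valGF u _) (le_valStratGF_dirac h)

section Valuation

variable {O : Type} {ρ : A → B → O} {E : Set O} {α : O → ℝ}

theorem fval_mono [Nonempty A] [Nonempty B] : Monotone (fval ρ E α) := fun y z hyz =>
  valGF_mono fun a b => by unfold extendVal; split_ifs <;> simp [hyz]

theorem fval_nonneg [Nonempty A] [Nonempty B] (hα : ∀ o ∉ E, 0 ≤ α o) {y : ℝ} (hy : 0 ≤ y) :
    0 ≤ fval ρ E α y :=
  valGF_nonneg fun a b => by unfold extendVal; split_ifs with h; exacts [hy, hα _ h]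

theorem IsLfpVal.lt_fval [Nonempty A] [Nonempty B] (hα : ∀ o ∉ E, 0 ≤ α o) {v y : ℝ}
    (hv : IsLfpVal ρ E α v) (hy : 0 ≤ y) (hyv : y < v) : y < fval ρ E α y := by
  by_contra! hfy
  obtain ⟨z, hz, hfix⟩ :=
    exists_isFixedPt_mem_Icc fval_mono hy (fval_nonneg hα le_rfl) hfy
  have := hv.2.2 z ⟨hz.1, hz.2.trans (hyv.le.trans hv.1.2)⟩ hfix
  linarith [hz.2]

theorem fval_le_self_of_forall [Nonempty A] [Nonempty B] {y : ℝ} {b : B}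
    (h : ∀ a, ρ a b ∉ E → α (ρ a b) ≤ y) : fval ρ E α y ≤ y :=
  valGF_le_of_forall_le (b := b) fun a => by
    unfold extendVal; split_ifs with hE; exacts [le_rfl, h a hE]

theorem Determined.eq_zero_or_exists_optimal_dirac_avoiding [Nonempty A] [Nonempty B]
    [DecidableEq A] (hdet : Determined ρ) (hα : ∀ o ∉ E, 0 ≤ α o) {v : ℝ}
    (hv : IsLfpVal ρ E α v) :
    v = 0 ∨ ∃ a : A, dirac a ∈ OptA (fun a' b => extendVal E α v (ρ a' b)) ∧
      ∀ b : B, ρ a b ∉ E := by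
  rcases hdet {o | o ∉ E ∧ v ≤ α o} with ⟨a, ha⟩ | ⟨b, hb⟩
  · have hval : valGF (fun a' b => extendVal E α v (ρ a' b)) = v := hv.2.1
    refine Or.inr ⟨a, dirac_mem_OptA fun b => ?_, fun b => (ha b).1⟩
    rw [hval, extendVal, if_neg (ha b).1]
    exact (ha b).2
  · refine Or.inl (le_antisymm (not_lt.1 fun hv0 => ?_) hv.1.1)
    let y := Finset.univ.sup' Finset.univ_nonempty fun a => extendVal E α 0 (ρ a b)
    have hle : ∀ a, extendVal E α 0 (ρ a b) ≤ y := fun a =>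
      Finset.le_sup' (fun a => extendVal E α 0 (ρ a b)) (Finset.mem_univ a)
    have hy : 0 ≤ y := (hle (Classical.arbitrary A)).trans' <| by
      unfold extendVal; split_ifs with h; exacts [le_rfl, hα _ h]
    have hyv : y < v := (Finset.sup'_lt_iff _).2 fun a _ => by
      unfold extendVal; split_ifs with h
      · exact hv0
      · simpa [h] using hb a
    have hfy : fval ρ E α y ≤ y := fval_le_self_of_forall (b := b) fun a hE => by
      simpa only [extendVal, if_neg hE] using hle a
    exact (hv.lt_fval hα hy hyv).not_ge hfy

end Valuation

end CRG

theorem stmt12_general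
    {A B O : Type} [Fintype A] [Fintype B]
    [Nonempty A] [Nonempty B] [DecidableEq A]
    (ρ : A → B → O) (hdet : CRG.Determined ρ) :
    (∀ (E : Set O) (α : O → ℝ), (∀ o ∉ E, α o ∈ Set.Icc (0:ℝ) 1) →
      ∀ v : ℝ, CRG.IsLfpVal ρ E α v →
        v = 0 ∨ ∃ a : A,
          CRG.dirac a ∈ CRG.OptA (fun a' b => CRG.extendVal E α v (ρ a' b)) ∧
          ∀ b : B, ρ a b ∉ E) ∧
    ∀ (E : Set O) (α : O → ℝ), (∀ o ∉ E, α o ∈ Set.Icc (0:ℝ) 1) →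
      CRG.RMwrt ρ E α := by
  refine ⟨fun E α hα v hv =>
    hdet.eq_zero_or_exists_optimal_dirac_avoiding (fun o ho => (hα o ho).1) hv,
    fun E α hα v hv => ?_⟩
  rcases hdet.eq_zero_or_exists_optimal_dirac_avoiding (fun o ho => (hα o ho).1) hv with
    hv0 | ⟨a, hopt, havoid⟩
  · exact Or.inl hv0
  · exact Or.inr ⟨CRG.dirac a, hopt, fun b _ => ⟨a, CRG.mem_supp_dirac a, havoid b⟩⟩

/-- every determined finite game form is reach-maximizable; a witness can
even be chosen among pure strategies. -/
theorem stmt12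
    {A B O : Type} [Fintype A] [Fintype B] [Fintype O]
    [Nonempty A] [Nonempty B] [Nonempty O] [DecidableEq A]
    (ρ : A → B → O) (hdet : CRG.Determined ρ) :
    (∀ (E : Set O) (α : O → ℝ), (∀ o ∉ E, α o ∈ Set.Icc (0:ℝ) 1) →
      ∀ v : ℝ, CRG.IsLfpVal ρ E α v →
        v = 0 ∨ ∃ a : A,
          CRG.dirac a ∈ CRG.OptA (fun a' b => CRG.extendVal E α v (ρ a' b)) ∧
          ∀ b : B, ρ a b ∉ E) ∧
    ∀ (E : Set O) (α : O → ℝ), (∀ o ∉ E, α o ∈ Set.Icc (0:ℝ) 1) →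
      CRG.RMwrt ρ E α :=
  stmt12_general ρ hdet
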